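/- arXiv:2402.13618 — 5 statements merged into one kernel-verified Lean document; each statement's English description precedes it below -/
import Mathlib

section
/- Decoding recovers each component of the interleaved encoding: for any v : Fin n → ℕ and i : Fin n, the number whose j-th bit is bit (j*n + i) of encode(v) equals v i. -/
/-- Interleaved encoding of `n` natural numbers into a single natural number:
bit `j` of component `i` is stored at bit position `j*n + i`. -/
def encode (n : ℕ) (v : Fin n → ℕ) : ℕ :=
  ∑ i : Fin n, ∑ j ∈ Finset.range (v i + 1),
    (Nat.testBit (v i) j).toNat * 2 ^ (j * n + (i : ℕ))

/-!
`encode n v` is a sum of powers `2 ^ (j * n + i)`, one for each set bit `j` of `v i`. By division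
with remainder these exponents are pairwise distinct, so they are exactly the set bits of the sum.
-/

theorem Nat.testBit_sum_two_pow (s : Finset ℕ) (p : ℕ) :
    (∑ q ∈ s, 2 ^ q).testBit p ↔ p ∈ s := by
  rw [← Nat.mem_bitIndices, ← List.mem_toFinset, Finset.toFinset_bitIndices_sum_two_pow]

theorem Nat.testBit_sum_two_pow_of_injOn {α : Type*} [DecidableEq α] {s : Finset α}
    {e : α → ℕ} (he : Set.InjOn e s) (p : ℕ) :
    (∑ k ∈ s, 2 ^ e k).testBit p ↔ ∃ k ∈ s, e k = p := by
  rw [← Finset.sum_image he, Nat.testBit_sum_two_pow, Finset.mem_image]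

theorem Nat.testBit_index_lt {m j : ℕ} (h : m.testBit j) : j < m :=
  Nat.lt_two_pow_self.trans_le (Nat.ge_two_pow_of_testBit h)

theorem mul_add_val_injective (n : ℕ) :
    Function.Injective fun k : Σ _ : Fin n, ℕ => k.2 * n + k.1 := by
  rintro ⟨i, j⟩ ⟨i', j'⟩ h
  have : NeZero n := ⟨i.pos.ne'⟩
  cases (Nat.divModEquiv n).symm.injective (a₁ := (j, i)) (a₂ := (j', i')) h
  rfl

theorem encode_eq_sum_two_pow (n : ℕ) (v : Fin n → ℕ) :
    encode n v = ∑ k ∈ Finset.univ.sigma fun i => {j ∈ Finset.range (v i + 1) | (v i).testBit j},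
      2 ^ (k.2 * n + k.1) := by
  rw [encode, Finset.sum_sigma]
  refine Finset.sum_congr rfl fun i _ => ?_
  rw [Finset.sum_filter]
  refine Finset.sum_congr rfl fun j _ => ?_
  cases (v i).testBit j <;> simp

theorem stmt_1_general (n : ℕ) (v : Fin n → ℕ) (i : Fin n) (j : ℕ) :
    Nat.testBit (encode n v) (j * n + (i : ℕ)) = Nat.testBit (v i) j := by
  rw [Bool.eq_iff_iff, encode_eq_sum_two_pow,
    Nat.testBit_sum_two_pow_of_injOn (mul_add_val_injective n).injOn]
  constructor
  · rintro ⟨⟨i', j'⟩, hk, heq⟩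
    cases mul_add_val_injective n (a₂ := ⟨i, j⟩) heq
    exact (Finset.mem_filter.mp (Finset.mem_sigma.mp hk).2).2
  · intro h
    exact ⟨⟨i, j⟩, by simp [h, Nat.lt_succ_of_lt (Nat.testBit_index_lt h)], rfl⟩

/-- Decoding recovers each component: the number whose `j`-th bit is bit
`j*n + i` of `encode n v` equals `v i`, i.e. the bits agree at every position. -/
theorem stmt_1 (n : ℕ) (hn : 1 ≤ n) (v : Fin n → ℕ) (i : Fin n) (j : ℕ) :
    Nat.testBit (encode n v) (j * n + (i : ℕ)) = Nat.testBit (v i) j :=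
  stmt_1_general n v i j
end

section
/- Updating one component via fetch-and-add is correct: if R = encode(v) and process i changes its component from v i to a new value x by adding posAdj − negAdj (where posAdj covers bits to set and negAdj covers bits to unset), then R + posAdj − negAdj = encode(v[i ↦ x]). -/
/-- Bits of the new value `x` that must be set (they are `1` in `x` and `0` in
the old value `a`), contributing `2^(j*n+i)` each. -/
def posAdj (n : ℕ) (i : Fin n) (a x : ℕ) : ℕ :=
  ∑ j ∈ (Finset.range (x + 1)).filter
      (fun j => Nat.testBit x j = true ∧ Nat.testBit a j = false),
    2 ^ (j * n + (i : ℕ))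

/-- Bits of the new value `x` that must be unset (they are `0` in `x` and `1` in
the old value `a`), contributing `2^(j*n+i)` each. -/
def negAdj (n : ℕ) (i : Fin n) (a x : ℕ) : ℕ :=
  ∑ j ∈ (Finset.range (a + 1)).filter
      (fun j => Nat.testBit x j = false ∧ Nat.testBit a j = true),
    2 ^ (j * n + (i : ℕ))

/-! The components of `encode` occupy disjoint bit positions, so updating component `i` only
replaces its own contribution; bit by bit, `a_j + [x_j ∧ ¬a_j] - [¬x_j ∧ a_j] = x_j`. -/

open Finset

def encodeComponent (n : ℕ) (i : Fin n) (a : ℕ) : ℕ :=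
  ∑ j ∈ range (a + 1), (a.testBit j).toNat * 2 ^ (j * n + (i : ℕ))

theorem encode_eq_sum_encodeComponent (n : ℕ) (v : Fin n → ℕ) :
    encode n v = ∑ i, encodeComponent n i (v i) :=
  rfl

theorem encode_update_add_encodeComponent (n : ℕ) (v : Fin n → ℕ) (i : Fin n) (x : ℕ) :
    encode n (Function.update v i x) + encodeComponent n i (v i)
      = encode n v + encodeComponent n i x := by
  have hrest : ∀ k ∈ univ.erase i,
      encodeComponent n k (Function.update v i x k) = encodeComponent n k (v k) :=
    fun k hk => by rw [Function.update_of_ne (ne_of_mem_erase hk)]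
  simp only [encode_eq_sum_encodeComponent, ← sum_erase_add _ _ (mem_univ i),
    sum_congr rfl hrest, Function.update_self]
  ac_rfl

theorem Nat.testBit_eq_false_of_le {a j : ℕ} (h : a ≤ j) : a.testBit j = false :=
  Nat.testBit_eq_false_of_lt (a.lt_two_pow_self.trans_le (Nat.pow_le_pow_right two_pos h))

theorem sum_range_succ_eq_of_testBit {M : Type*} [AddCommMonoid M] {a N : ℕ} (h : a < N)
    (f : ℕ → M) (hf : ∀ j, a.testBit j = false → f j = 0) :
    ∑ j ∈ range (a + 1), f j = ∑ j ∈ range N, f j :=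
  sum_subset (range_subset_range.2 h) fun j _ hj =>
    hf j (Nat.testBit_eq_false_of_le (by simp at hj; omega))

theorem toNat_mul_add_ite_sub_ite (b c : Bool) (p : ℤ) :
    b.toNat * p + (if c = true ∧ b = false then p else 0)
      - (if c = false ∧ b = true then p else 0) = c.toNat * p := by
  cases b <;> cases c <;> simp

theorem encodeComponent_add_posAdj_sub_negAdj (n : ℕ) (i : Fin n) (a x : ℕ) :
    (encodeComponent n i a : ℤ) + posAdj n i a x - negAdj n i a x = encodeComponent n i x := by
  set N := max a x + 1
  have ha : a < N := by omega
  have hx : x < N := by omega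
  have hcomp : ∀ b < N, encodeComponent n i b
      = ∑ j ∈ range N, (b.testBit j).toNat * 2 ^ (j * n + (i : ℕ)) := fun b hb =>
    sum_range_succ_eq_of_testBit hb _ fun j hj => by simp [hj]
  have hpos : posAdj n i a x = ∑ j ∈ range N,
      if x.testBit j = true ∧ a.testBit j = false then 2 ^ (j * n + (i : ℕ)) else 0 := by
    rw [posAdj, sum_filter]
    exact sum_range_succ_eq_of_testBit hx _ fun j hj => by simp [hj]
  have hneg : negAdj n i a x = ∑ j ∈ range N,
      if x.testBit j = false ∧ a.testBit j = true then 2 ^ (j * n + (i : ℕ)) else 0 := by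
    rw [negAdj, sum_filter]
    exact sum_range_succ_eq_of_testBit ha _ fun j hj => by simp [hj]
  rw [hcomp a ha, hcomp x hx, hpos, hneg]
  push_cast [apply_ite (Nat.cast : ℕ → ℤ)]
  rw [← sum_add_distrib, ← sum_sub_distrib]
  exact sum_congr rfl fun j _ => toNat_mul_add_ite_sub_ite _ _ _

theorem stmt_2_general (n : ℕ) (v : Fin n → ℕ) (i : Fin n) (x : ℕ) :
    (encode n v : ℤ) + (posAdj n i (v i) x : ℤ) - (negAdj n i (v i) x : ℤ)
      = (encode n (Function.update v i x) : ℤ) := by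
  have hupdate := congrArg (Nat.cast : ℕ → ℤ) (encode_update_add_encodeComponent n v i x)
  have hcomp := encodeComponent_add_posAdj_sub_negAdj n i (v i) x
  push_cast at hupdate
  linarith

/-- Updating one component via fetch-and-add is correct. -/
theorem stmt_2 (n : ℕ) (hn : 1 ≤ n) (v : Fin n → ℕ) (i : Fin n) (x : ℕ) :
    (encode n v : ℤ) + (posAdj n i (v i) x : ℤ) - (negAdj n i (v i) x : ℤ)
      = (encode n (Function.update v i x) : ℤ) :=
  stmt_2_general n v i x
end

section
/- In the unary max-register encoding, writing a value K > prevMax by adding ∑_{k=prevMax+1}^{K} 2^(k*n+i) to the register preserves the invariant that the register is the interleaved encoding of the per-process unary maxima, and the reconstructed maximum over all components is the maximum of all values written so far. -/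
/-!
Distinct pairs `(i, k)` with `i < n` give distinct bit positions `k * n + i`, so the highest set
bit of the register lies in row `k = max m`, i.e. in `[max m * n, (max m + 1) * n)`, and
`⌊log₂ R⌋ / n = max m`.
-/

/-- Unary interleaved max-register encoding: process `i` stores its maximum
`m i` in unary, with bits at positions `k*n + i` for `1 ≤ k ≤ m i`. -/
def encodeU (n : ℕ) (m : Fin n → ℕ) : ℕ :=
  ∑ i : Fin n, ∑ k ∈ Finset.Icc 1 (m i), 2 ^ (k * n + (i : ℕ))

open Finset Function

lemma sum_Icc_one_add_sum_Icc_succ {M : Type*} [AddCommMonoid M] (f : ℕ → M) {a b : ℕ}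
    (hab : a ≤ b) : ∑ k ∈ Icc 1 a, f k + ∑ k ∈ Icc (a + 1) b, f k = ∑ k ∈ Icc 1 b, f k := by
  simpa only [← Icc_add_one_left_eq_Ioc, zero_add] using
    sum_Ioc_consecutive f (Nat.zero_le a) hab

section

variable {n : ℕ}

lemma encodeU_update (m : Fin n → ℕ) (i : Fin n) {K : ℕ} (hK : m i ≤ K) :
    encodeU n (update m i K) = encodeU n m + ∑ k ∈ Icc (m i + 1) K, 2 ^ (k * n + (i : ℕ)) := by
  have hrest : ∑ j ∈ univ.erase i, ∑ k ∈ Icc 1 (update m i K j), 2 ^ (k * n + (j : ℕ)) =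
      ∑ j ∈ univ.erase i, ∑ k ∈ Icc 1 (m j), 2 ^ (k * n + (j : ℕ)) :=
    sum_congr rfl fun j hj => by rw [update_of_ne (ne_of_mem_erase hj)]
  rw [encodeU, encodeU, ← add_sum_erase _ _ (mem_univ i), ← add_sum_erase _ _ (mem_univ i),
    update_self, hrest, ← sum_Icc_one_add_sum_Icc_succ _ hK, add_right_comm]

lemma encodeU_eq_sum_sigma (m : Fin n → ℕ) :
    encodeU n m = ∑ p ∈ univ.sigma fun i => Icc 1 (m i), 2 ^ (p.2 * n + (p.1 : ℕ)) := by
  rw [encodeU, sum_sigma]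

lemma bitPosition_injective :
    Injective fun p : (Σ _ : Fin n, ℕ) => p.2 * n + (p.1 : ℕ) := by
  intro p q hpq
  have : NeZero n := ⟨p.1.pos.ne'⟩
  exact ((Nat.divModEquiv n).symm.injective.comp
    ((Equiv.sigmaEquivProd _ _).trans (Equiv.prodComm _ _)).injective) hpq

lemma encodeU_lt_two_pow (m : Fin n → ℕ) : encodeU n m < 2 ^ ((univ.sup m + 1) * n) := by
  rw [encodeU_eq_sum_sigma, ← sum_image bitPosition_injective.injOn]
  refine Nat.geomSum_lt le_rfl ?_
  simp only [mem_image, mem_sigma, mem_Icc]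
  rintro _ ⟨⟨i, k⟩, ⟨-, -, hk⟩, rfl⟩
  dsimp only at hk ⊢
  have : k * n ≤ univ.sup m * n := Nat.mul_le_mul_right n (hk.trans (le_sup (mem_univ i)))
  have := i.isLt
  rw [Nat.succ_mul]
  omega

lemma two_pow_le_encodeU {m : Fin n → ℕ} {i : Fin n} {k : ℕ} (hk : k ∈ Icc 1 (m i)) :
    2 ^ (k * n + (i : ℕ)) ≤ encodeU n m :=
  (single_le_sum (fun _ _ => Nat.zero_le _) hk).trans
    (single_le_sum (f := fun j => ∑ k ∈ Icc 1 (m j), 2 ^ (k * n + (j : ℕ)))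
      (fun _ _ => Nat.zero_le _) (mem_univ i))

lemma log_encodeU_div (m : Fin n → ℕ) : Nat.log 2 (encodeU n m) / n = univ.sup m := by
  rcases (univ.sup m).eq_zero_or_pos with hs | hs
  · have hm : ∀ i, m i = 0 := fun i => (Finset.sup_eq_bot_iff m univ).1 hs i (mem_univ i)
    simp [encodeU, hm, hs]
  · obtain ⟨j, -, -⟩ := Finset.lt_sup_iff.1 hs
    obtain ⟨i, -, hi⟩ := exists_mem_eq_sup univ ⟨j, mem_univ j⟩ m
    have hlow : 2 ^ (univ.sup m * n) ≤ encodeU n m :=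
      (Nat.pow_le_pow_right two_pos (Nat.le_add_right _ _)).trans
        (two_pow_le_encodeU (i := i) (mem_Icc.2 ⟨hs, hi.le⟩))
    refine Nat.div_eq_of_lt_le (Nat.le_log_of_pow_le one_lt_two hlow) ?_
    exact Nat.log_lt_of_lt_pow (lt_of_lt_of_le (by positivity) hlow).ne' (encodeU_lt_two_pow m)

end

theorem stmt_3_general (n : ℕ) :
    (∀ (m : Fin n → ℕ) (i : Fin n) (K : ℕ), m i < K →
      encodeU n m + ∑ k ∈ Finset.Icc (m i + 1) K, 2 ^ (k * n + (i : ℕ))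
        = encodeU n (Function.update m i K)) ∧
    (∃ f : ℕ → ℕ, ∀ m : Fin n → ℕ, f (encodeU n m) = Finset.univ.sup m) :=
  ⟨fun m i _ hK => (encodeU_update m i hK.le).symm,
    fun R => Nat.log 2 R / n, log_encodeU_div⟩

/-- A `MaxWrite(K)` with `K >` the old maximum, performed by adding
`∑_{k=m i + 1}^{K} 2^(k*n+i)`, preserves the encoding invariant; moreover the
maximum over all components is recoverable from any encoded register value. -/
theorem stmt_3 (n : ℕ) (hn : 1 ≤ n) :
    (∀ (m : Fin n → ℕ) (i : Fin n) (K : ℕ), m i < K →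
      encodeU n m + ∑ k ∈ Finset.Icc (m i + 1) K, 2 ^ (k * n + (i : ℕ))
        = encodeU n (Function.update m i K)) ∧
    (∃ f : ℕ → ℕ, ∀ m : Fin n → ℕ, f (encodeU n m) = Finset.univ.sup m) :=
  stmt_3_general n
end

section
/- A sequential FIFO queue is a 1-ordering object: with proposal sequences prop_i = enq(i), decision sequences dec_i = deq(), and decision function d(i, OK·ℓ) = ℓ, every sequential execution α whose invocations come from the prop sequences and that contains some complete prop_j admits a singleton set S_α = {first enqueued value in α} such that any extension α·α'·β_i with invs((α·α')|i) = prop_i and invs(β_i) = dec_i yields a dequeue returning the element of S_α, which is the index ℓ of a process with invs((α·α')|ℓ) = prop_ℓ. -/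
/-- A FIFO queue is a 1-ordering object. With `prop_i = enq(i)` and
`dec_i = deq()`, a sequential execution using only proposal invocations is just
a list of enqueued process indices (enqueue appends, so the queue state is the
list itself, and a dequeue returns its head). If `α` contains the complete
proposal of some process `j`, then `S_α` is the singleton containing the first
enqueued value of `α`, and for any extension `α ++ α'` containing the
proposal of process `i`, the dequeue of `dec_i` returns the element `ℓ` of
`S_α`, which is the index of a process whose proposal appears in `α ++ α'`. -/
theorem stmt_4 (n : ℕ) (α : List (Fin n)) (j : Fin n) (hj : j ∈ α) :
    ∀ (i : Fin n) (α' : List (Fin n)), i ∈ α ++ α' →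
      ∃ ℓ : Fin n, (α ++ α').head? = some ℓ ∧
        ℓ ∈ ({α.head (List.ne_nil_of_mem hj)} : Finset (Fin n)) ∧
        ℓ ∈ α ++ α' := by
  intro i α' _
  have hne := List.ne_nil_of_mem hj
  refine ⟨α.head hne, ?_, by simp, ?_⟩
  · cases α with
    | nil => exact absurd rfl hne
    | cons a l => simp
  · exact List.mem_append_left _ (List.head_mem hne)
end

section
/- A sequential stack is a 1-ordering object: with prop_i = push(i), dec_i = n+1 consecutive pops, and d returning the last non-ε response among the pop responses, every sequential execution α using only proposal invocations and containing some complete prop_j admits S_α = {value of the first push in α}, and in any extension α·α'·β_i (with invs((α·α')|i)=prop_i, invs(β_i)=dec_i, invocations of α·α' from the proposals), the last non-ε pop response in β_i equals the element of S_α. -/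
/-- A stack is a 1-ordering object. With `prop_i = push(i)` (so each index
appears at most once: the combined execution is `Nodup`), a sequential
execution using only proposal invocations is a list of pushed indices; since
push prepends, the stack state after `α ++ α'` is `(α ++ α').reverse`, and the
`t`-th of `n+1` consecutive pops returns `((α ++ α').reverse)[t]?` (ε = `none`
on empty). The last non-ε pop response equals the element of
`S_α = {first pushed value of α}`, which is the index of a process whose
proposal appears in `α ++ α'`. -/
theorem stmt_6 (n : ℕ) (α : List (Fin n)) (j : Fin n) (hj : j ∈ α)
    (i : Fin n) (α' : List (Fin n)) (hnd : (α ++ α').Nodup) (hi : i ∈ α ++ α') :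
    ∃ (ℓ : Fin n) (x : ℕ), x < n + 1 ∧
      ((α ++ α').reverse)[x]? = some ℓ ∧
      (∀ t, x < t → t < n + 1 → ((α ++ α').reverse)[t]? = none) ∧
      ℓ ∈ ({α.head (List.ne_nil_of_mem hj)} : Finset (Fin n)) ∧
      ℓ ∈ α ++ α' := by
  set L := α ++ α' with hL
  have hne : α ≠ [] := List.ne_nil_of_mem hj
  have halen : 0 < α.length := List.length_pos_iff.mpr hne
  have hLlen : 0 < L.length := by
    simp [hL]; omega
  have hlen : L.length ≤ n := by
    have := hnd.length_le_card
    simpa using this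
  refine ⟨α.head hne, L.length - 1, by omega, ?_, ?_, by simp, ?_⟩
  · rw [List.getElem?_reverse (by omega)]
    have : L.length - 1 - (L.length - 1) = 0 := by omega
    rw [this]
    rw [hL, List.getElem?_append, if_pos halen]
    rw [List.getElem?_eq_getElem halen, List.getElem_zero]
  · intro t ht _
    apply List.getElem?_eq_none
    simp; omega
  · exact List.mem_append_left _ (List.head_mem hne)
end
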